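/- Let r ≥ 1 be an integer. Then ∑ (−1/2)^{c₁+c₂+⋯+c_r} / (1^{c₁} c₁! · 2^{c₂} c₂! ⋯ r^{c_r} c_r!) = −(1/(r·2^{2r−1}))·C(2r−2, r−1), where the sum runs over all tuples (c₁,…,c_r) of nonnegative integers satisfying c₁ + 2c₂ + ⋯ + r·c_r = r, and C(2r−2,r−1) denotes a binomial coefficient. Equivalently, the value ζ_r⋆(0) of the meromorphic continuation of the multiple zeta-star function at identical arguments at s = 0 equals −C(2r−2,r−1)/(r·2^{2r−1}). -/

import Mathlib

/-! Put `S_r(a) = ∑_c ∏ᵢ aᶜⁱ / (iᶜⁱ cᵢ!)`, the cycle index of the symmetric group `S_r` with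
every power sum specialised to `a`. Lowering a single `cᵢ` by one shows `r S_r = a ∑_{j<r} S_j`
(the coefficientwise form of `(1 - x) F' = a F` for `F = exp (a ∑ xⁱ / i) = (1 - x)⁻ᵃ`), so
`(r + 1) S_{r+1} = (r + a) S_r` and `S_r = a (a + 1) ⋯ (a + r - 1) / r!`. At `a = -1/2` the
ratios `(2r - 1) / (2r + 2)` are those of `-C(2r-2, r-1) / (r 2^(2r-1))`. -/

/-- The (finite) set of all tuples `(c₁, …, c_r)` of nonnegative integers with
`c₁ + 2c₂ + ⋯ + r·c_r = r`. -/
def weightedTuples (r : ℕ) : Finset (Fin r → ℕ) :=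
  (Fintype.piFinset fun _ : Fin r => Finset.range (r + 1)).filter
    fun c => ∑ i : Fin r, (i.val + 1) * c i = r

open Finset Nat

-- `n` slots, weight `r`; slot `i : Fin n` counts cycles of length `i + 1`. The recurrence lowers
-- the weight below the number of slots, so the two are kept apart.
def tuplesOfWeight (n r : ℕ) : Finset (Fin n → ℕ) :=
  (Fintype.piFinset fun _ : Fin n => range (r + 1)).filter
    fun c => ∑ i : Fin n, (i.val + 1) * c i = r

theorem weightedTuples_eq_tuplesOfWeight (r : ℕ) : weightedTuples r = tuplesOfWeight r r := rfl

section tuplesOfWeight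

variable {n r : ℕ}

theorem mul_le_of_weight_eq {c : Fin n → ℕ} (hc : ∑ j : Fin n, (j.val + 1) * c j = r) (i : Fin n) :
    (i.val + 1) * c i ≤ r :=
  hc ▸ single_le_sum (f := fun j : Fin n => (j.val + 1) * c j) (fun _ _ => Nat.zero_le _)
    (mem_univ i)

theorem mem_tuplesOfWeight {c : Fin n → ℕ} :
    c ∈ tuplesOfWeight n r ↔ ∑ i : Fin n, (i.val + 1) * c i = r := by
  refine ⟨fun h => (mem_filter.mp h).2, fun h => mem_filter.mpr ⟨?_, h⟩⟩
  refine Fintype.mem_piFinset.mpr fun i => mem_range.mpr (Nat.lt_succ_of_le ?_)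
  exact (Nat.le_mul_of_pos_left _ i.val.succ_pos).trans (mul_le_of_weight_eq h i)

theorem tuplesOfWeight_zero : tuplesOfWeight n 0 = {0} := by
  ext c
  simp [mem_tuplesOfWeight, sum_eq_zero_iff, funext_iff]

theorem weight_add_single (c : Fin n → ℕ) (i : Fin n) :
    ∑ j : Fin n, (j.val + 1) * (c + Pi.single i 1 : Fin n → ℕ) j =
      ∑ j : Fin n, (j.val + 1) * c j + (i.val + 1) := by
  simp [mul_add, sum_add_distrib, Pi.single_apply]

theorem image_add_single_tuplesOfWeight (i : Fin n) :
    (tuplesOfWeight n r).image (· + Pi.single i 1) =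
      (tuplesOfWeight n (r + (i.val + 1))).filter (fun c => c i ≠ 0) := by
  ext c
  simp only [mem_image, mem_filter, mem_tuplesOfWeight]
  constructor
  · rintro ⟨d, rfl, rfl⟩
    exact ⟨weight_add_single d i, by simp⟩
  · rintro ⟨hc, hci⟩
    have hc' : c - Pi.single i 1 + Pi.single i 1 = c := by
      ext j
      rcases eq_or_ne j i with rfl | hj
      · simpa using Nat.sub_add_cancel (Nat.one_le_iff_ne_zero.mpr hci)
      · simp [hj]
    refine ⟨c - Pi.single i 1, ?_, hc'⟩
    rw [← hc', weight_add_single] at hc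
    omega

end tuplesOfWeight

section cycleIndexSum

variable {K : Type*} [Field K] {n : ℕ}

def cycleFactor (a : K) (i k : ℕ) : K :=
  a ^ k / (((i + 1 : ℕ) : K) ^ k * (k ! : K))

def cycleTerm (a : K) (c : Fin n → ℕ) : K :=
  ∏ i : Fin n, cycleFactor a i (c i)

def cycleIndexSum (a : K) (n r : ℕ) : K :=
  ∑ c ∈ tuplesOfWeight n r, cycleTerm a c

theorem cycleTerm_eq (a : K) (c : Fin n → ℕ) :
    cycleTerm a c =
      a ^ (∑ i, c i) / ∏ i : Fin n, ((((i : ℕ) + 1 : ℕ) : K) ^ c i * ((c i)! : K)) := by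
  rw [cycleTerm, ← prod_pow_eq_pow_sum, ← prod_div_distrib]
  rfl

theorem cycleIndexSum_zero (a : K) : cycleIndexSum a n 0 = 1 := by
  simp [cycleIndexSum, tuplesOfWeight_zero, cycleTerm, cycleFactor]

variable [CharZero K]

theorem cycleFactor_succ (a : K) (i k : ℕ) :
    (((i + 1) * (k + 1) : ℕ) : K) * cycleFactor a i (k + 1) = a * cycleFactor a i k := by
  simp only [cycleFactor, factorial_succ]
  push_cast
  field_simp
  ring

theorem cycleTerm_add_single (a : K) (c : Fin n → ℕ) (i : Fin n) :
    (((i.val + 1) * (c i + 1) : ℕ) : K) * cycleTerm a (c + Pi.single i 1) = a * cycleTerm a c := by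
  have hrest : ∏ j ∈ {i}ᶜ, cycleFactor a j ((c + Pi.single i 1 : Fin n → ℕ) j) =
      ∏ j ∈ {i}ᶜ, cycleFactor a j (c j) :=
    prod_congr rfl fun j hj => by
      rw [Pi.add_apply, Pi.single_eq_of_ne (by simpa using hj), add_zero]
  rw [cycleTerm, cycleTerm, Fintype.prod_eq_mul_prod_compl i, Fintype.prod_eq_mul_prod_compl i,
    hrest, Pi.add_apply, Pi.single_eq_same, ← mul_assoc, cycleFactor_succ, mul_assoc]

theorem sum_weight_mul_cycleTerm (a : K) (r : ℕ) (i : Fin n) :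
    ∑ c ∈ tuplesOfWeight n (r + (i.val + 1)), (((i.val + 1) * c i : ℕ) : K) * cycleTerm a c =
      a * cycleIndexSum a n r := by
  rw [← sum_filter_of_ne (p := fun c => c i ≠ 0) fun c _ h hci => h (by simp [hci]),
    ← image_add_single_tuplesOfWeight, sum_image fun _ _ _ _ => add_right_cancel,
    cycleIndexSum, mul_sum]
  refine sum_congr rfl fun c _ => ?_
  simpa using cycleTerm_add_single a c i

theorem sum_weight_mul_cycleTerm_of_lt (a : K) {r : ℕ} {i : Fin n} (hi : r < i.val + 1) :
    ∑ c ∈ tuplesOfWeight n r, (((i.val + 1) * c i : ℕ) : K) * cycleTerm a c = 0 := by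
  refine sum_eq_zero fun c hc => ?_
  have := mul_le_of_weight_eq (mem_tuplesOfWeight.mp hc) i
  have hci : c i = 0 := by by_contra h; nlinarith [Nat.pos_of_ne_zero h]
  simp [hci]

theorem cycleIndexSum_recurrence (a : K) {r : ℕ} (h : r ≤ n) :
    (r : K) * cycleIndexSum a n r = a * ∑ j ∈ range r, cycleIndexSum a n j := by
  calc (r : K) * cycleIndexSum a n r
      = ∑ i : Fin n, ∑ c ∈ tuplesOfWeight n r, (((i.val + 1) * c i : ℕ) : K) * cycleTerm a c := by
        rw [cycleIndexSum, mul_sum, sum_comm]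
        refine sum_congr rfl fun c hc => ?_
        rw [← sum_mul, ← Nat.cast_sum, mem_tuplesOfWeight.mp hc]
    _ = ∑ i : Fin r, a * cycleIndexSum a n (r - (i.val + 1)) := by
        rw [← sum_subset (subset_univ (univ.map (Fin.castLEEmb h))), sum_map]
        · refine sum_congr rfl fun i _ => ?_
          rw [← sum_weight_mul_cycleTerm, Fin.castLEEmb_apply, Fin.val_castLE,
            Nat.sub_add_cancel i.isLt]
        · intro i _ hi
          refine sum_weight_mul_cycleTerm_of_lt a (not_le.mp fun hir => hi ?_)
          exact mem_map.mpr ⟨⟨i, hir⟩, mem_univ _, rfl⟩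
    _ = a * ∑ j ∈ range r, cycleIndexSum a n j := by
        rw [← mul_sum, Fin.sum_univ_eq_sum_range (fun k => cycleIndexSum a n (r - (k + 1))),
          ← sum_range_reflect]
        refine congrArg _ (sum_congr rfl fun j hj => ?_)
        congr 1
        have := mem_range.mp hj
        omega

theorem cycleIndexSum_mul_factorial (a : K) {r : ℕ} (h : r ≤ n) :
    cycleIndexSum a n r * r ! = (ascPochhammer K r).eval a := by
  induction r with
  | zero => simp [cycleIndexSum_zero]
  | succ r ih =>
    have hr := cycleIndexSum_recurrence a (n := n) (r := r) (by omega)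
    have hr1 := cycleIndexSum_recurrence a h
    rw [sum_range_succ, mul_add, ← hr] at hr1
    rw [ascPochhammer_succ_eval, ← ih (by omega), factorial_succ]
    push_cast at hr1 ⊢
    linear_combination (r ! : K) * hr1

end cycleIndexSum

theorem ascPochhammer_eval_neg_half_div_factorial {K : Type*} [Field K] [CharZero K] (m : ℕ) :
    (ascPochhammer K (m + 1)).eval (-1 / 2) / ((m + 1) ! : K) =
      -((centralBinom m : K) / (((m + 1 : ℕ) : K) * 2 ^ (2 * m + 1))) := by
  induction m with
  | zero => norm_num
  | succ m ih =>
    have hfact : ((m + 1) ! : K) ≠ 0 := Nat.cast_ne_zero.mpr (factorial_ne_zero _)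
    have hP := (div_eq_iff hfact).mp ih
    have hC : ((m + 1 : ℕ) : K) * centralBinom (m + 1) = 2 * (2 * m + 1) * centralBinom m := by
      exact_mod_cast succ_mul_centralBinom_succ m
    rw [ascPochhammer_succ_eval, hP, factorial_succ (m + 1)]
    have hm2 : (m : K) + 1 + 1 ≠ 0 := by exact_mod_cast (m + 1).succ_ne_zero
    push_cast at hC ⊢
    field_simp
    linear_combination (2 : K) ^ (2 * m + 2) * hC

theorem cycleIndexSum_neg_half (K : Type*) [Field K] [CharZero K] {r : ℕ} (hr : 1 ≤ r) :
    cycleIndexSum (-1 / 2 : K) r r =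
      -(((2 * r - 2).choose (r - 1) : K) / ((r : K) * 2 ^ (2 * r - 1))) := by
  obtain ⟨m, rfl⟩ := Nat.exists_eq_add_of_le' hr
  rw [show 2 * (m + 1) - 2 = 2 * m by omega, show 2 * (m + 1) - 1 = 2 * m + 1 by omega,
    add_tsub_cancel_right, ← centralBinom_eq_two_mul_choose,
    ← ascPochhammer_eval_neg_half_div_factorial, ← cycleIndexSum_mul_factorial _ le_rfl,
    mul_div_cancel_right₀ _ (Nat.cast_ne_zero.mpr (factorial_ne_zero _))]

/-- For `r ≥ 1`:
`∑_{c₁+2c₂+⋯+rc_r=r} (−1/2)^{c₁+⋯+c_r}/(1^{c₁}c₁!⋯r^{c_r}c_r!) = −C(2r−2,r−1)/(r·2^{2r−1})`.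
Equivalently (substituting the continued value `ζ(0) = −1/2` for every factor `ζ(i·0)`
in the explicit formula for `ζ_r⋆(s)`), the meromorphically continued value `ζ_r⋆(0)`
equals `−C(2r−2,r−1)/(r·2^{2r−1})`. -/
theorem multZetaStar_at_zero (r : ℕ) (hr : 1 ≤ r) :
    (∑ c ∈ weightedTuples r,
        (-(1 : ℚ) / 2) ^ (∑ i, c i) /
          (∏ i : Fin r, ((((i : ℕ) + 1 : ℕ) : ℚ) ^ c i * ((c i).factorial : ℚ)))
      = -(((2 * r - 2).choose (r - 1) : ℚ) / ((r : ℚ) * 2 ^ (2 * r - 1)))) ∧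
    (∑ c ∈ weightedTuples r,
        1 / (∏ i : Fin r, ((((i : ℕ) + 1 : ℕ) : ℂ) ^ c i * ((c i).factorial : ℂ))) *
        ∏ i : Fin r, riemannZeta ((((i : ℕ) + 1 : ℕ) : ℂ) * 0) ^ c i
      = -(((2 * r - 2).choose (r - 1) : ℂ) / ((r : ℂ) * 2 ^ (2 * r - 1)))) := by
  have hζ (i : Fin r) : riemannZeta ((((i : ℕ) + 1 : ℕ) : ℂ) * 0) = -1 / 2 := by
    rw [mul_zero, riemannZeta_zero]
  rw [← cycleIndexSum_neg_half ℚ hr, ← cycleIndexSum_neg_half ℂ hr, cycleIndexSum, cycleIndexSum,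
    weightedTuples_eq_tuplesOfWeight]
  refine ⟨sum_congr rfl fun c _ => ?_, sum_congr rfl fun c _ => ?_⟩
  · rw [cycleTerm_eq, neg_div]
  · rw [cycleTerm_eq, one_div_mul_eq_div, prod_congr rfl fun i _ => by rw [hζ i],
      prod_pow_eq_pow_sum]
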